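/- Derivation of the system of wave equations from the div–curl system. Let ψ_ν = ψ¹_ν + iψ²_ν : ℝ^{1+2} → ℂ (ν = 0,1,2) be Schwartz functions satisfying the div–curl system (i)–(ii). Then for each α ∈ {0,1,2}: □ψ_α = i[ −∂_t(ψ_α A₀) + ∂₁(ψ_α A₁) + ∂₂(ψ_α A₂) ] − i[ −∂_t(ψ₀ A_α) + ∂₁(ψ₁ A_α) + ∂₂(ψ₂ A_α) ] + i ∂_α( −ψ₀ A₀ + ψ₁ A₁ + ψ₂ A₂ ), where □ = −∂_t² + ∂₁² + ∂₂² and ∂₀ = ∂_t. -/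

import Mathlib

noncomputable section
open MeasureTheory
open scoped FourierTransform ENNReal RealInnerProductSpace

/-- The spatial plane `ℝ²`. -/
abbrev E2 := EuclideanSpace ℝ (Fin 2)
/-- Minkowski space `ℝ^{1+2}`, coordinates `(t, p)`. -/
abbrev ST2 := ℝ × E2
/-- Partial derivative `∂_ν` of a complex-valued function on `ℝ^{1+2}`. -/
def pdC (ν : Fin 3) (f : ST2 → ℂ) (z : ST2) : ℂ :=
  if ν.val = 0 then deriv (fun s => f (s, z.2)) z.1
  else deriv (fun s : ℝ =>
    f (z.1, z.2 + s • EuclideanSpace.single (if ν.val = 1 then (0 : Fin 2) else 1) (1 : ℝ))) (0 : ℝ)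
/-- The d'Alembertian of a complex-valued function on `ℝ^{1+2}`. -/
def boxC (f : ST2 → ℂ) (z : ST2) : ℂ :=
  -(pdC 0 (pdC 0 f) z) + pdC 1 (pdC 1 f) z + pdC 2 (pdC 2 f) z
/-- `A_α(t,p) = (1/2π) Σ_j ∫ ((p_j-q_j)/‖p-q‖²)(ψ¹_α ψ²_j - ψ²_α ψ¹_j)(t,q) dq`, where
`ψ¹_ν = Re ψ_ν` and `ψ²_ν = Im ψ_ν`. -/
def gaugeA (ψ : Fin 3 → ST2 → ℂ) (α : Fin 3) (z : ST2) : ℝ :=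
  (1 / (2 * Real.pi)) * ∑ j : Fin 2, ∫ q : E2,
    ((z.2 j - q j) / ‖z.2 - q‖ ^ 2) *
      ((ψ α (z.1, q)).re * (ψ j.succ (z.1, q)).im - (ψ α (z.1, q)).im * (ψ j.succ (z.1, q)).re)

/-- Equation (i) of the div–curl system:
`∂_α ψ_β - ∂_β ψ_α = i ψ_β A_α - i ψ_α A_β`. -/
def DivCurlI (ψ : Fin 3 → ST2 → ℂ) : Prop :=
  ∀ (α β : Fin 3) (z : ST2),
    pdC α (ψ β) z - pdC β (ψ α) z =
      Complex.I * ψ β z * (gaugeA ψ α z : ℂ) - Complex.I * ψ α z * (gaugeA ψ β z : ℂ)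

/-- Equation (ii) of the div–curl system:
`-∂_t ψ₀ + ∂₁ ψ₁ + ∂₂ ψ₂ = i(-ψ₀A₀ + ψ₁A₁ + ψ₂A₂)`. -/
def DivCurlII (ψ : Fin 3 → ST2 → ℂ) : Prop :=
  ∀ z : ST2, -(pdC 0 (ψ 0) z) + pdC 1 (ψ 1) z + pdC 2 (ψ 2) z =
    Complex.I * (-(ψ 0 z * (gaugeA ψ 0 z : ℂ)) + ψ 1 z * (gaugeA ψ 1 z : ℂ)
      + ψ 2 z * (gaugeA ψ 2 z : ℂ))

/-!
Equation (i) gives `∂_β ψ_α = ∂_α ψ_β - i (ψ_β A_α - ψ_α A_β)`. Differentiating once more in `β`,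
commuting `∂_β ∂_α`, and summing over `β` with the Minkowski signs turns `□ψ_α` into `∂_α` of the
divergence `-∂_t ψ₀ + ∂₁ ψ₁ + ∂₂ ψ₂`, which (ii) replaces by the nonlinearity.

The analytic input is that every term may be differentiated: `ψ` is Schwartz, and `A_α` is the
spatial convolution of a Schwartz function with the kernel `x_j / ‖x‖²`, which is `O(‖x‖⁻¹)` and
hence locally integrable in the plane; differentiating under the integral sign, the derivative
falls on the Schwartz factor.
-/

open Metric Filter Module
open scoped SchwartzMap

def coordVec : Fin 3 → ST2 :=
  ![(1, 0), (0, EuclideanSpace.single 0 1), (0, EuclideanSpace.single 1 1)]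

section PartialDeriv

variable {f g : ST2 → ℂ} {z : ST2}

theorem pdC_eq_fderiv (hf : DifferentiableAt ℝ f z) (ν : Fin 3) :
    pdC ν f z = fderiv ℝ f z (coordVec ν) := by
  have hline (v : E2) : HasDerivAt (fun s : ℝ => ((z.1, z.2 + s • v) : ST2)) (0, v) 0 :=
    (hasDerivAt_const _ _).prodMk
      (by simpa using ((hasDerivAt_id (0 : ℝ)).smul_const v).const_add z.2)
  fin_cases ν
  · exact (hf.hasFDerivAt.comp_hasDerivAt_of_eq z.1
      ((hasDerivAt_id z.1).prodMk (hasDerivAt_const _ z.2)) rfl).deriv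
  · exact (hf.hasFDerivAt.comp_hasDerivAt_of_eq 0 (hline _) (by simp)).deriv
  · exact (hf.hasFDerivAt.comp_hasDerivAt_of_eq 0 (hline _) (by simp)).deriv

theorem pdC_eq_fderiv_apply (hf : Differentiable ℝ f) (ν : Fin 3) :
    pdC ν f = fun w => fderiv ℝ f w (coordVec ν) :=
  funext fun w => pdC_eq_fderiv (hf w) ν

theorem pdC_const_mul (c : ℂ) (ν : Fin 3) :
    pdC ν (fun w => c * f w) z = c * pdC ν f z := by
  unfold pdC
  split_ifs <;> exact deriv_const_mul_field c

theorem pdC_neg (ν : Fin 3) : pdC ν (fun w => -f w) z = -pdC ν f z := by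
  simpa using pdC_const_mul (f := f) (z := z) (-1) ν

theorem pdC_add (hf : DifferentiableAt ℝ f z) (hg : DifferentiableAt ℝ g z) (ν : Fin 3) :
    pdC ν (fun w => f w + g w) z = pdC ν f z + pdC ν g z := by
  rw [pdC_eq_fderiv (hf.fun_add hg), fderiv_fun_add hf hg, add_apply, pdC_eq_fderiv hf,
    pdC_eq_fderiv hg]

theorem pdC_sub (hf : DifferentiableAt ℝ f z) (hg : DifferentiableAt ℝ g z) (ν : Fin 3) :
    pdC ν (fun w => f w - g w) z = pdC ν f z - pdC ν g z := by
  rw [pdC_eq_fderiv (hf.fun_sub hg), fderiv_fun_sub hf hg, sub_apply, pdC_eq_fderiv hf,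
    pdC_eq_fderiv hg]

theorem ContDiff.differentiable_pdC (hf : ContDiff ℝ 2 f) (ν : Fin 3) :
    Differentiable ℝ (pdC ν f) := by
  rw [pdC_eq_fderiv_apply (hf.differentiable (by norm_num))]
  exact ((hf.fderiv_right (m := 1) (by norm_num)).differentiable (by norm_num)).clm_apply
    (differentiable_const _)

theorem pdC_comm (hf : ContDiff ℝ 2 f) (α β : Fin 3) :
    pdC β (pdC α f) z = pdC α (pdC β f) z := by
  have hD : Differentiable ℝ (fderiv ℝ f) :=
    (hf.fderiv_right (m := 1) (by norm_num)).differentiable (by norm_num)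
  have hsecond (γ δ : Fin 3) :
      pdC δ (pdC γ f) z = fderiv ℝ (fderiv ℝ f) z (coordVec δ) (coordVec γ) := by
    rw [pdC_eq_fderiv (hf.differentiable_pdC γ z),
      pdC_eq_fderiv_apply (hf.differentiable (by norm_num)),
      fderiv_clm_apply (hD z) (differentiableAt_const _)]
    simp
  rw [hsecond, hsecond]
  exact hf.contDiffAt.isSymmSndFDerivAt (by simp) _ _

theorem pdC_pdC_eq_of_pdC_eq {u v P Q : ST2 → ℂ} {α β : Fin 3} (hv : ContDiff ℝ 2 v)
    (hP : Differentiable ℝ P) (hQ : Differentiable ℝ Q)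
    (h : pdC β u = fun w => pdC α v w - Complex.I * (P w - Q w)) (z : ST2) :
    pdC β (pdC β u) z = pdC α (pdC β v) z - Complex.I * (pdC β P z - pdC β Q z) := by
  rw [h, pdC_sub (hv.differentiable_pdC α z) (((hP.fun_sub hQ).const_mul Complex.I) z),
    pdC_const_mul, pdC_sub (hP z) (hQ z), pdC_comm hv]

end PartialDeriv

theorem one_add_norm_le_mul_one_add_norm_sub {X F : Type*} [SeminormedAddCommGroup X]
    [SeminormedAddCommGroup F] (z : X × F) (x : F) :
    1 + ‖x‖ ≤ (1 + ‖z‖) * (1 + ‖(z.1, z.2 - x)‖) := by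
  have hx : ‖x‖ ≤ ‖z.2‖ + ‖z.2 - x‖ := by simpa using norm_sub_le z.2 (z.2 - x)
  have h₁ : ‖z.2‖ ≤ ‖z‖ := norm_snd_le z
  have h₂ : ‖z.2 - x‖ ≤ ‖(z.1, z.2 - x)‖ := norm_snd_le (z.1, z.2 - x)
  nlinarith [norm_nonneg z, norm_nonneg (z.1, z.2 - x)]

section DifferentiationUnderIntegral

variable {X F E : Type*} [NormedAddCommGroup X] [NormedSpace ℝ X] [NormedAddCommGroup F]
  [NormedSpace ℝ F] [NormedAddCommGroup E] [NormedSpace ℝ E]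

theorem SchwartzMap.exists_norm_apply_sub_le (f : 𝓢(X × F, E)) (k : ℕ) :
    ∃ C, ∀ (z : X × F) (x : F), ‖f (z.1, z.2 - x)‖ ≤ C * (1 + ‖z‖) ^ k * ((1 + ‖x‖) ^ k)⁻¹ := by
  refine ⟨2 ^ k * (Finset.Iic (k, 0)).sup (fun m => SchwartzMap.seminorm ℝ m.1 m.2) f,
    fun z x => ?_⟩
  have hdecay := SchwartzMap.one_add_le_sup_seminorm_apply (𝕜 := ℝ) (m := (k, 0)) le_rfl le_rfl
    f (z.1, z.2 - x)
  rw [norm_iteratedFDeriv_zero] at hdecay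
  rw [le_mul_inv_iff₀ (by positivity)]
  calc ‖f (z.1, z.2 - x)‖ * (1 + ‖x‖) ^ k
      ≤ ‖f (z.1, z.2 - x)‖ * ((1 + ‖z‖) ^ k * (1 + ‖(z.1, z.2 - x)‖) ^ k) := by
        rw [← mul_pow]
        gcongr
        exact one_add_norm_le_mul_one_add_norm_sub z x
    _ = (1 + ‖z‖) ^ k * ((1 + ‖(z.1, z.2 - x)‖) ^ k * ‖f (z.1, z.2 - x)‖) := by ring
    _ ≤ _ := by rw [mul_comm _ ((1 + ‖z‖) ^ k)]; gcongr

variable [MeasurableSpace F] [BorelSpace F] [SecondCountableTopology F] {μ : Measure F}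

theorem SchwartzMap.differentiable_integral_smul_comp_sub {K : F → ℝ} {k : ℕ}
    (hK_meas : AEStronglyMeasurable K μ) (hK : Integrable (fun x => K x * ((1 + ‖x‖) ^ k)⁻¹) μ)
    (g : 𝓢(X × F, E)) :
    Differentiable ℝ (fun z : X × F => ∫ x, K x • g (z.1, z.2 - x) ∂μ) := by
  intro z₀
  obtain ⟨C₀, hC₀⟩ := g.exists_norm_apply_sub_le k
  obtain ⟨C₁, hC₁⟩ := (SchwartzMap.fderivCLM ℝ (X × F) E g).exists_norm_apply_sub_le k
  simp only [SchwartzMap.fderivCLM_apply] at hC₁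
  set w : F → ℝ := fun x => ‖K x‖ * ((1 + ‖x‖) ^ k)⁻¹
  have hw : Integrable w μ := by
    refine hK.norm.congr (Eventually.of_forall fun x => ?_)
    simp [w, norm_mul, abs_of_pos (by positivity : (0 : ℝ) < 1 + ‖x‖)]
  have hweight (C : ℝ) (z : X × F) (x : F) :
      ‖K x‖ * (C * (1 + ‖z‖) ^ k * ((1 + ‖x‖) ^ k)⁻¹) = C * (1 + ‖z‖) ^ k * w x := by
    simp only [w]; ring
  have hshift : Continuous fun p : (X × F) × F => (p.1.1, p.1.2 - p.2) := by fun_prop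
  have hmeas (z : X × F) : AEStronglyMeasurable (fun x => K x • g (z.1, z.2 - x)) μ :=
    hK_meas.smul (g.continuous.comp (hshift.comp (Continuous.prodMk_right z))).aestronglyMeasurable
  refine (hasFDerivAt_integral_of_dominated_of_fderiv_le
    (F' := fun z x => K x • fderiv ℝ g (z.1, z.2 - x))
    (bound := fun x => |C₁| * (2 + ‖z₀‖) ^ k * w x) (ball_mem_nhds z₀ one_pos)
    (Eventually.of_forall hmeas) ?_ ?_ ?_ (hw.const_mul _) ?_).differentiableAt
  · refine (hw.const_mul (C₀ * (1 + ‖z₀‖) ^ k)).mono' (hmeas z₀)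
      (Eventually.of_forall fun x => ?_)
    rw [norm_smul, ← hweight]
    exact mul_le_mul_of_nonneg_left (hC₀ z₀ x) (norm_nonneg _)
  · exact hK_meas.smul (((g.smooth ⊤).continuous_fderiv (by simp)).comp
      (hshift.comp (Continuous.prodMk_right z₀))).aestronglyMeasurable
  · refine Eventually.of_forall fun x z hz => ?_
    have hz' : 1 + ‖z‖ ≤ 2 + ‖z₀‖ := by
      have := norm_le_norm_add_norm_sub' z z₀
      rw [mem_ball, dist_eq_norm] at hz
      linarith
    have hw_nonneg : 0 ≤ w x := by positivity
    rw [norm_smul]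
    calc ‖K x‖ * ‖fderiv ℝ g (z.1, z.2 - x)‖ ≤ C₁ * (1 + ‖z‖) ^ k * w x := by
          rw [← hweight]; exact mul_le_mul_of_nonneg_left (hC₁ z x) (norm_nonneg _)
      _ ≤ |C₁| * (2 + ‖z₀‖) ^ k * w x := by gcongr; exact le_abs_self C₁
  · refine Eventually.of_forall fun x z _ => ?_
    have hshift_deriv :
        HasFDerivAt (fun z : X × F => (z.1, z.2 - x)) (ContinuousLinearMap.id ℝ (X × F)) z := by
      simpa using hasFDerivAt_fst.prodMk ((hasFDerivAt_snd (𝕜 := ℝ) (p := z)).sub_const x)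
    have hcomp := ((g.hasFDerivAt _).comp z hshift_deriv).const_smul (K x)
    rwa [ContinuousLinearMap.comp_id] at hcomp

end DifferentiationUnderIntegral

theorem integrable_inv_norm_pow_mul_inv_one_add_norm_sq {E : Type*} [NormedAddCommGroup E]
    [NormedSpace ℝ E] [FiniteDimensional ℝ E] [Nontrivial E] [MeasurableSpace E] [BorelSpace E]
    (μ : Measure E) [μ.IsAddHaarMeasure] :
    Integrable (fun x : E => (‖x‖ ^ (finrank ℝ E - 1))⁻¹ * ((1 + ‖x‖) ^ 2)⁻¹) μ := by
  refine (integrable_fun_norm_addHaar μ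
    (f := fun y => (y ^ (finrank ℝ E - 1))⁻¹ * ((1 + y) ^ 2)⁻¹)).2 ?_
  have h : Integrable (fun y : ℝ => (1 + ‖y‖) ^ (-(2 : ℝ))) :=
    integrable_one_add_norm (by norm_num)
  refine h.integrableOn.congr_fun (fun y (hy : 0 < y) => ?_) measurableSet_Ioi
  dsimp only
  rw [Real.norm_of_nonneg hy.le, Real.rpow_neg (by positivity), smul_eq_mul,
    mul_inv_cancel_left₀ (by positivity)]
  norm_cast

theorem abs_apply_div_norm_sq_le (x : E2) (j : Fin 2) : |x j / ‖x‖ ^ 2| ≤ ‖x‖⁻¹ := by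
  rcases eq_or_ne x 0 with rfl | hx
  · simp
  have hx' : 0 < ‖x‖ := norm_pos_iff.mpr hx
  rw [abs_div, abs_of_nonneg (by positivity : (0 : ℝ) ≤ ‖x‖ ^ 2), div_le_iff₀ (by positivity), sq,
    ← mul_assoc, inv_mul_cancel₀ hx'.ne', one_mul]
  exact (Real.norm_eq_abs _).symm.trans_le (PiLp.norm_apply_le x j)

theorem integrable_apply_div_norm_sq_mul (j : Fin 2) :
    Integrable (fun x : E2 => x j / ‖x‖ ^ 2 * ((1 + ‖x‖) ^ 2)⁻¹) := by
  have h := integrable_inv_norm_pow_mul_inv_one_add_norm_sq (volume : Measure E2)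
  rw [finrank_euclideanSpace_fin] at h
  refine h.mono' (by fun_prop) (Eventually.of_forall fun x => ?_)
  rw [norm_mul, Real.norm_eq_abs, Real.norm_of_nonneg (by positivity), pow_one]
  gcongr
  exact abs_apply_div_norm_sq_le x j

/-- The witness is `x ↦ ⟪i f x, g x⟫_ℝ`. -/
theorem SchwartzMap.exists_apply_eq_re_mul_im_sub_im_mul_re {D : Type*} [NormedAddCommGroup D]
    [NormedSpace ℝ D] (f g : 𝓢(D, ℂ)) :
    ∃ G : 𝓢(D, ℝ), ∀ x, G x = (f x).re * (g x).im - (f x).im * (g x).re := by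
  refine ⟨SchwartzMap.pairing ((innerSL ℝ).comp (Complex.I • ContinuousLinearMap.id ℝ ℂ)) f g,
    fun x => ?_⟩
  simp [Complex.inner]
  ring

theorem gaugeA_eq_integral_comp_sub (ψ : Fin 3 → ST2 → ℂ) (α : Fin 3) (z : ST2) :
    gaugeA ψ α z = (1 / (2 * Real.pi)) * ∑ j : Fin 2, ∫ x : E2, x j / ‖x‖ ^ 2 *
      ((ψ α (z.1, z.2 - x)).re * (ψ j.succ (z.1, z.2 - x)).im -
        (ψ α (z.1, z.2 - x)).im * (ψ j.succ (z.1, z.2 - x)).re) := by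
  unfold gaugeA
  congr 1
  refine Finset.sum_congr rfl fun j _ => ?_
  rw [← integral_sub_left_eq_self _ volume z.2]
  simp only [sub_sub_cancel, PiLp.sub_apply]

theorem differentiable_gaugeA (S : Fin 3 → 𝓢(ST2, ℂ)) (α : Fin 3) :
    Differentiable ℝ (gaugeA (fun ν => S ν) α) := by
  choose G hG using fun j : Fin 2 => (S α).exists_apply_eq_re_mul_im_sub_im_mul_re (S j.succ)
  have hA : gaugeA (fun ν => S ν) α = fun z => (1 / (2 * Real.pi)) *
      ∑ j : Fin 2, ∫ x : E2, (x j / ‖x‖ ^ 2) • G j (z.1, z.2 - x) := by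
    funext z
    simp only [gaugeA_eq_integral_comp_sub, hG, smul_eq_mul]
  have hK_meas (j : Fin 2) : Measurable fun x : E2 => x j / ‖x‖ ^ 2 :=
    (by fun_prop : Measurable fun x : E2 => x j).div (by fun_prop)
  rw [hA]
  exact (Differentiable.fun_sum fun j _ => (G j).differentiable_integral_smul_comp_sub
    (hK_meas j).aestronglyMeasurable (integrable_apply_div_norm_sq_mul j)).const_mul _

/-- **Derivation of the system of wave equations from the div–curl system**
(equation (3.3) of Krieger): Schwartz solutions of the div–curl system satisfy
`□ψ_α = i[-∂_t(ψ_α A₀)+∂₁(ψ_α A₁)+∂₂(ψ_α A₂)] - i[-∂_t(ψ₀A_α)+∂₁(ψ₁A_α)+∂₂(ψ₂A_α)]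
+ i ∂_α(-ψ₀A₀+ψ₁A₁+ψ₂A₂)`. -/
theorem wave_equation_from_div_curl
    (ψ : Fin 3 → ST2 → ℂ)
    (hS : ∀ ν, ∃ S : SchwartzMap ST2 ℂ, ∀ z, ψ ν z = S z)
    (h1 : DivCurlI ψ) (h2 : DivCurlII ψ) :
    ∀ (α : Fin 3) (z : ST2),
      boxC (ψ α) z =
        Complex.I * (-(pdC 0 (fun w => ψ α w * (gaugeA ψ 0 w : ℂ)) z) +
            pdC 1 (fun w => ψ α w * (gaugeA ψ 1 w : ℂ)) z +
            pdC 2 (fun w => ψ α w * (gaugeA ψ 2 w : ℂ)) z) -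
        Complex.I * (-(pdC 0 (fun w => ψ 0 w * (gaugeA ψ α w : ℂ)) z) +
            pdC 1 (fun w => ψ 1 w * (gaugeA ψ α w : ℂ)) z +
            pdC 2 (fun w => ψ 2 w * (gaugeA ψ α w : ℂ)) z) +
        Complex.I * pdC α (fun w => -(ψ 0 w * (gaugeA ψ 0 w : ℂ)) +
            ψ 1 w * (gaugeA ψ 1 w : ℂ) + ψ 2 w * (gaugeA ψ 2 w : ℂ)) z := by
  choose S hS using hS
  have hψS : ψ = fun ν => ⇑(S ν) := funext fun ν => funext (hS ν)
  have hψ (ν : Fin 3) : ContDiff ℝ 2 (ψ ν) := hψS ▸ (S ν).smooth 2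
  have hψA (μ ν : Fin 3) : Differentiable ℝ fun w => ψ μ w * (gaugeA ψ ν w : ℂ) :=
    (hψ μ).differentiable (by norm_num) |>.mul <|
      Complex.ofRealCLM.differentiable.comp (hψS ▸ differentiable_gaugeA S ν)
  intro α z
  have hcurl (β : Fin 3) : pdC β (pdC β (ψ α)) z = pdC α (pdC β (ψ β)) z -
      Complex.I * (pdC β (fun w => ψ β w * (gaugeA ψ α w : ℂ)) z -
        pdC β (fun w => ψ α w * (gaugeA ψ β w : ℂ)) z) :=
    pdC_pdC_eq_of_pdC_eq (hψ β) (hψA β α) (hψA α β)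
      (funext fun w => by linear_combination -h1 α β w) z
  have hdiv : Complex.I * pdC α (fun w => -(ψ 0 w * (gaugeA ψ 0 w : ℂ)) +
        ψ 1 w * (gaugeA ψ 1 w : ℂ) + ψ 2 w * (gaugeA ψ 2 w : ℂ)) z =
      -pdC α (pdC 0 (ψ 0)) z + pdC α (pdC 1 (ψ 1)) z + pdC α (pdC 2 (ψ 2)) z := by
    have hD (ν : Fin 3) := (hψ ν).differentiable_pdC ν z
    rw [← pdC_const_mul, ← funext h2, pdC_add ((hD 0).fun_neg.fun_add (hD 1)) (hD 2),
      pdC_add (hD 0).fun_neg (hD 1), pdC_neg]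
  rw [boxC, hcurl 0, hcurl 1, hcurl 2, hdiv]
  ring
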